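/- arXiv:2601.10111 — 2 statements merged into one kernel-verified Lean document; each statement's English description precedes it below -/
import Mathlib

section
/- Let H be a real inner product space, m ≥ 1 a natural number, and ν a real number with √2/2 < ν ≤ 1; set c := 2ν² − 1, so 0 < c ≤ 1. Let Φ : (ZMod 2)^m → H be a family of vectors with ⟪Φ x, Φ y⟫ = c^{wt(x + y)} for all x, y ∈ (ZMod 2)^m, and let Ψ ∈ H be a unit vector with ⟪Ψ, Φ x⟫ = ν^m for all x. Let δ be a real number with 0 < δ ≤ 1 and 2 ≤ 2^m · ν^{2m} · δ. Then there exists a ZMod 2–submodule L of (ZMod 2)^m, of rank l, such that 2^l ≤ 4 · ν^{−2m} · δ^{−1} and the vector w := ∑_{x ∈ L} Φ x satisfies ⟪Ψ, w⟫² ≥ (1 − δ) · ‖w‖². -/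
open scoped Classical RealInnerProductSpace

/-- Hamming weight of a vector over `ZMod 2`. -/
def wt {m : ℕ} (x : Fin m → ZMod 2) : ℕ :=
  (Finset.univ.filter fun i => x i ≠ 0).card

/-!
Take for `L` the span of `l` vectors `G₀, …, G_{l-1}` and put `c = 2ν² - 1`. The Gram relations
give `⟪Ψ, w⟫ = |L| ν^m` and `‖w‖² = |L| ∑_{x ∈ L} c^{wt x}`, so the fidelity bound reads
`(1 - δ) ∑_{x ∈ L} c^{wt x} ≤ |L| ν^{2m}`. Summing over coefficient vectors `u ∈ 𝔽₂^l` instead of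
over `L` only rescales both sides by the size of the kernel, so it suffices to bound
`S(G) = ∑_u c^{wt (∑ u_j G_j)}`. For `u ≠ 0` the vector `∑ u_j G_j` is uniformly distributed when
`G` is, and the average of `c^{wt}` over `𝔽₂^m` is `((1 + c) / 2)^m = ν^{2m}`; hence some `G` has
`S(G) ≤ 1 + (2^l - 1) ν^{2m}`, which suffices once `2^l ν^{2m} δ ≥ 1`. The least such `l` has
`2^l ≤ 2 ν^{-2m} δ^{-1}`, and `dim L ≤ l`.
-/

open Finset

theorem AddMonoidHom.card_nsmul_sum_comp_of_surjective {A B M : Type*} [AddGroup A] [AddMonoid B]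
    [Fintype A] [Fintype B] [AddCommMonoid M] (φ : A →+ B) (hφ : Function.Surjective φ)
    (f : B → M) : Fintype.card B • ∑ a, f (φ a) = Fintype.card A • ∑ b, f b := by
  have hfiber : ∀ b, #{a | φ a = b} = #{a | φ a = 0} := fun b =>
    card_fiber_eq_of_mem_range φ (hφ b) ⟨0, map_zero φ⟩
  have hsum : ∀ f : B → M, ∑ a, f (φ a) = #{a | φ a = 0} • ∑ b, f b := by
    intro f
    rw [← sum_fiberwise' univ φ f, smul_sum]
    simp_rw [sum_const, hfiber]
  have hcard : Fintype.card A = #{a | φ a = 0} * Fintype.card B := by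
    rw [← card_univ, card_eq_sum_card_fiberwise (t := univ) (f := φ) fun _ _ => mem_univ _]
    simp [hfiber, mul_comm]
  rw [hsum, hcard, smul_smul, mul_comm]

theorem LinearMap.card_range_nsmul_sum_comp {R A V M : Type*} [Ring R] [AddCommGroup A]
    [Module R A] [AddCommGroup V] [Module R V] [Fintype A] [AddCommMonoid M]
    (φ : A →ₗ[R] V) [Fintype (LinearMap.range φ)] (f : V → M) :
    Fintype.card (LinearMap.range φ) • ∑ a, f (φ a) =
      Fintype.card A • ∑ x : LinearMap.range φ, f x :=
  φ.rangeRestrict.toAddMonoidHom.card_nsmul_sum_comp_of_surjective φ.surjective_rangeRestrict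
    (f ∘ Subtype.val)

theorem card_nsmul_sum_linearCombination_of_ne_zero {K V ι M : Type*} [Field K]
    [AddCommGroup V] [Module K V] [Fintype V] [Fintype ι] [DecidableEq ι] [AddCommMonoid M]
    {u : ι → K} (hu : u ≠ 0) (f : V → M) :
    Fintype.card V • ∑ G : ι → V, f (Fintype.linearCombination K G u) =
      Fintype.card V ^ Fintype.card ι • ∑ x, f x := by
  obtain ⟨j₀, hj₀⟩ : ∃ j, u j ≠ 0 := Function.ne_iff.mp hu
  let φ : (ι → V) →+ V := ∑ j, u j • (LinearMap.proj j : (ι → V) →ₗ[K] V).toAddMonoidHom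
  have hφ : ∀ G, φ G = Fintype.linearCombination K G u := fun G => by
    simp [φ, Fintype.linearCombination_apply]
  have hsurj : Function.Surjective φ := fun x =>
    ⟨Pi.single j₀ ((u j₀)⁻¹ • x), by
      simp [hφ, Fintype.linearCombination_apply, Pi.single_apply, smul_smul, mul_inv_cancel₀ hj₀]⟩
  simpa only [hφ, Fintype.card_pi, prod_const, card_univ] using
    φ.card_nsmul_sum_comp_of_surjective hsurj f

theorem pow_wt_eq_prod {m : ℕ} (r : ℝ) (x : Fin m → ZMod 2) :
    r ^ wt x = ∏ i, if x i = 0 then 1 else r := by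
  rw [wt, prod_ite, prod_const, prod_const, one_pow, one_mul]

theorem sum_pow_wt (m : ℕ) (r : ℝ) : ∑ x : Fin m → ZMod 2, r ^ wt x = (1 + r) ^ m := by
  simp_rw [pow_wt_eq_prod]
  rw [← Fintype.prod_sum fun _ b => if b = 0 then 1 else r]
  have hpair : ∑ b : ZMod 2, (if b = 0 then 1 else r) = 1 + r := by
    rw [show (univ : Finset (ZMod 2)) = {0, 1} from rfl, sum_pair zero_ne_one]; simp
  simp [hpair]

theorem exists_sum_pow_wt_linearCombination_le (m l : ℕ) (r : ℝ) :
    ∃ G : Fin l → Fin m → ZMod 2,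
      ∑ u, r ^ wt (Fintype.linearCombination (ZMod 2) G u) ≤
        1 + (2 ^ l - 1) * ((1 + r) / 2) ^ m := by
  set N : ℝ := ((2 : ℝ) ^ m) ^ l
  have hmean : ∀ u ≠ 0, ∑ G : Fin l → Fin m → ZMod 2,
      r ^ wt (Fintype.linearCombination (ZMod 2) G u) = N * ((1 + r) / 2) ^ m := by
    intro u hu
    have h := card_nsmul_sum_linearCombination_of_ne_zero hu fun x : Fin m → ZMod 2 => r ^ wt x
    simp only [nsmul_eq_mul, sum_pow_wt, Fintype.card_pi, ZMod.card, prod_const, card_univ,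
      Fintype.card_fin, Nat.cast_pow, Nat.cast_ofNat] at h
    rw [div_pow, ← mul_div_assoc, eq_div_iff (by positivity), mul_comm]
    exact h
  have htotal : ∑ G : Fin l → Fin m → ZMod 2, ∑ u, r ^ wt (Fintype.linearCombination (ZMod 2) G u)
      = ∑ _G : Fin l → Fin m → ZMod 2, (1 + (2 ^ l - 1) * ((1 + r) / 2) ^ m) := by
    rw [sum_comm, ← add_sum_erase _ _ (mem_univ 0),
      sum_congr rfl fun u hu => hmean u (ne_of_mem_erase hu)]
    have hwt : wt (0 : Fin m → ZMod 2) = 0 := by simp [wt]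
    simp [hwt, N, Fintype.card_pi, ZMod.card, card_erase_of_mem, Nat.cast_sub Nat.one_le_two_pow]
    ring
  obtain ⟨G, -, hG⟩ := exists_le_of_sum_le univ_nonempty htotal.le
  exact ⟨G, hG⟩

theorem exists_one_le_two_pow_mul_le_two {x : ℝ} (hx0 : 0 < x) (hx1 : x ≤ 1) :
    ∃ l : ℕ, 1 ≤ 2 ^ l * x ∧ 2 ^ l * x ≤ 2 := by
  obtain ⟨n, hle, hlt⟩ := exists_nat_pow_near (one_le_inv_iff₀.mpr ⟨hx0, hx1⟩) one_lt_two
  have hle' := mul_le_mul_of_nonneg_right hle hx0.le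
  have hlt' := mul_lt_mul_of_pos_right hlt hx0
  rw [inv_mul_cancel₀ hx0.ne'] at hle' hlt'
  refine ⟨n + 1, hlt'.le, ?_⟩
  rw [pow_succ]
  linarith

section InnerProduct

variable {H : Type*} [NormedAddCommGroup H] [InnerProductSpace ℝ H]

theorem norm_sq_sum_eq_card_mul_sum_of_inner_eq {G : Type*} [AddGroup G] [Fintype G]
    {Φ : G → H} {κ : G → ℝ} (hΦ : ∀ x y, ⟪Φ x, Φ y⟫ = κ (x + y)) :
    ‖∑ x, Φ x‖ ^ 2 = Fintype.card G * ∑ z, κ z := by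
  rw [← real_inner_self_eq_norm_sq, sum_inner]
  simp_rw [inner_sum, hΦ]
  calc ∑ x : G, ∑ y, κ (x + y) = ∑ _x : G, ∑ z, κ z :=
        sum_congr rfl fun x _ => Equiv.sum_comp (Equiv.addLeft x) κ
    _ = Fintype.card G * ∑ z, κ z := by rw [sum_const, card_univ, nsmul_eq_mul]

theorem sq_inner_sum_ge_of_inner_eq {G : Type*} [AddGroup G] [Fintype G]
    {Φ : G → H} {κ : G → ℝ} {Ψ : H} {β δ : ℝ}
    (hΦ : ∀ x y, ⟪Φ x, Φ y⟫ = κ (x + y)) (hΨΦ : ∀ x, ⟪Ψ, Φ x⟫ = β)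
    (h : (1 - δ) * ∑ z, κ z ≤ Fintype.card G * β ^ 2) :
    ⟪Ψ, ∑ x, Φ x⟫ ^ 2 ≥ (1 - δ) * ‖∑ x, Φ x‖ ^ 2 := by
  rw [norm_sq_sum_eq_card_mul_sum_of_inner_eq hΦ, inner_sum]
  simp only [hΨΦ, sum_const, card_univ, nsmul_eq_mul]
  have hcard : (0 : ℝ) ≤ Fintype.card G := Nat.cast_nonneg _
  calc (1 - δ) * (Fintype.card G * ∑ z, κ z)
      = Fintype.card G * ((1 - δ) * ∑ z, κ z) := by ring
    _ ≤ Fintype.card G * (Fintype.card G * β ^ 2) := mul_le_mul_of_nonneg_left h hcard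
    _ = (Fintype.card G * β) ^ 2 := by ring

theorem LinearMap.sq_inner_sum_range_ge {R A V : Type*} [Ring R] [AddCommGroup A]
    [Module R A] [AddCommGroup V] [Module R V] [Fintype A] (φ : A →ₗ[R] V)
    [Fintype (LinearMap.range φ)] {Φ : V → H} {κ : V → ℝ} {Ψ : H} {β δ : ℝ}
    (hΦ : ∀ x y, ⟪Φ x, Φ y⟫ = κ (x + y)) (hΨΦ : ∀ x, ⟪Ψ, Φ x⟫ = β)
    (h : (1 - δ) * ∑ a, κ (φ a) ≤ Fintype.card A * β ^ 2) :
    ⟪Ψ, ∑ x : LinearMap.range φ, Φ x⟫ ^ 2 ≥ (1 - δ) * ‖∑ x : LinearMap.range φ, Φ x‖ ^ 2 := by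
  refine sq_inner_sum_ge_of_inner_eq (G := LinearMap.range φ) (κ := fun x => κ x)
    (fun x y => hΦ x y) (fun x => hΨΦ x) ?_
  have hrange := φ.card_range_nsmul_sum_comp κ
  rw [nsmul_eq_mul, nsmul_eq_mul] at hrange
  have hA : (0 : ℝ) < Fintype.card A := by exact_mod_cast Fintype.card_pos
  rw [← mul_le_mul_iff_of_pos_left hA]
  calc Fintype.card A * ((1 - δ) * ∑ x : LinearMap.range φ, κ x)
      = Fintype.card (LinearMap.range φ) * ((1 - δ) * ∑ a, κ (φ a)) := by
        rw [mul_left_comm, ← hrange]; ring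
    _ ≤ Fintype.card (LinearMap.range φ) * (Fintype.card A * β ^ 2) := by gcongr
    _ = Fintype.card A * (Fintype.card (LinearMap.range φ) * β ^ 2) := by ring

end InnerProduct

theorem stmt_6_general {H : Type*} [NormedAddCommGroup H] [InnerProductSpace ℝ H]
    (m : ℕ) (ν : ℝ) (hν1 : Real.sqrt 2 / 2 < ν) (hν2 : ν ≤ 1)
    (Φ : (Fin m → ZMod 2) → H) (Ψ : H)
    (hΦ : ∀ x y : Fin m → ZMod 2, ⟪Φ x, Φ y⟫ = (2 * ν ^ 2 - 1) ^ wt (x + y))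
    (hΨΦ : ∀ x : Fin m → ZMod 2, ⟪Ψ, Φ x⟫ = ν ^ m)
    (δ : ℝ) (hδ0 : 0 < δ) (hδ1 : δ ≤ 1) :
    ∃ L : Submodule (ZMod 2) (Fin m → ZMod 2),
      (2 : ℝ) ^ Module.finrank (ZMod 2) L ≤ 4 * (ν ^ (2 * m))⁻¹ * δ⁻¹ ∧
      ⟪Ψ, ∑ x : L, Φ x⟫ ^ 2 ≥ (1 - δ) * ‖∑ x : L, Φ x‖ ^ 2 := by
  have hν0 : 0 < ν := lt_of_le_of_lt (by positivity) hν1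
  set A := ν ^ (2 * m)
  have hA0 : 0 < A := by positivity
  obtain ⟨l, hl_ge, hl_le⟩ := exists_one_le_two_pow_mul_le_two (mul_pos hA0 hδ0)
    (mul_le_one₀ (pow_le_one₀ hν0.le hν2) hδ0.le hδ1)
  obtain ⟨G, hG⟩ := exists_sum_pow_wt_linearCombination_le m l (2 * ν ^ 2 - 1)
  rw [show ((1 + (2 * ν ^ 2 - 1)) / 2) ^ m = A by simp only [A, pow_mul]; ring] at hG
  set φ := Fintype.linearCombination (ZMod 2) G
  refine ⟨LinearMap.range φ, ?_, ?_⟩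
  · calc (2 : ℝ) ^ Module.finrank (ZMod 2) (LinearMap.range φ) ≤ 2 ^ l :=
          pow_le_pow_right₀ one_le_two (φ.finrank_range_le.trans (by simp))
      _ ≤ 4 * A⁻¹ * δ⁻¹ := by
          rw [mul_assoc, ← mul_inv, le_mul_inv_iff₀ (by positivity)]
          linarith
  · -- the sum in the statement uses `Subtype.fintype`, not `LinearMap.fintypeRange`
    rw [Subsingleton.elim (Subtype.fintype _) φ.fintypeRange]
    refine φ.sq_inner_sum_range_ge (κ := fun x => (2 * ν ^ 2 - 1) ^ wt x) hΦ hΨΦ ?_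
    calc (1 - δ) * ∑ u, (2 * ν ^ 2 - 1) ^ wt (φ u) ≤ (1 - δ) * (1 + (2 ^ l - 1) * A) := by
          gcongr
      _ ≤ 2 ^ l * A := by nlinarith
      _ = Fintype.card (Fin l → ZMod 2) * (ν ^ m) ^ 2 := by
          simp [A, Fintype.card_pi, ZMod.card, ← pow_mul, mul_comm m]

theorem stmt_6 {H : Type*} [NormedAddCommGroup H] [InnerProductSpace ℝ H]
    (m : ℕ) (hm : 1 ≤ m) (ν : ℝ) (hν1 : Real.sqrt 2 / 2 < ν) (hν2 : ν ≤ 1)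
    (Φ : (Fin m → ZMod 2) → H) (Ψ : H) (hΨ : ‖Ψ‖ = 1)
    (hΦ : ∀ x y : Fin m → ZMod 2, ⟪Φ x, Φ y⟫ = (2 * ν ^ 2 - 1) ^ wt (x + y))
    (hΨΦ : ∀ x : Fin m → ZMod 2, ⟪Ψ, Φ x⟫ = ν ^ m)
    (δ : ℝ) (hδ0 : 0 < δ) (hδ1 : δ ≤ 1) (h2 : 2 ≤ 2 ^ m * ν ^ (2 * m) * δ) :
    ∃ L : Submodule (ZMod 2) (Fin m → ZMod 2),
      (2 : ℝ) ^ Module.finrank (ZMod 2) L ≤ 4 * (ν ^ (2 * m))⁻¹ * δ⁻¹ ∧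
      ⟪Ψ, ∑ x : L, Φ x⟫ ^ 2 ≥ (1 - δ) * ‖∑ x : L, Φ x‖ ^ 2 :=
  stmt_6_general m ν hν1 hν2 Φ Ψ hΦ hΨΦ δ hδ0 hδ1
end

section
/- Let p be a real number and suppose x₁, x₂, x₃, x₄ are nonnegative real numbers with ρ(p) = x₁·P₀ + x₂·P₁ + x₃·P₊ + x₄·P_H in Matrix (Fin 2) (Fin 2) ℝ. Then x₄ ≥ 1 − (2 + √2)·p. In particular, among all such decompositions of the dephased magic state into the stabilizer projectors P₀, P₁, P₊ and the magic projector P_H, the minimal possible weight on P_H is exactly 1 − (2 + √2)·p for 0 ≤ p ≤ (1 − tan(π/8))/2, attained by the decomposition ρ(p) = (1+√2)p·P₀ + p·P₊ + (1−(2+√2)p)·P_H. -/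
/-!
With `cos (π/8) sin (π/8) = √2/4` and `cos² (π/8), sin² (π/8) = (2 ± √2)/4` all matrices become
explicit. The lower bound is a duality argument: the functional `M ↦ M 0 1 - M 1 1` vanishes on
`P₀` and `P₊`, equals `-1` on `P₁` and `(√2 - 1)/2 > 0` on `P_H`, so applying it to a
decomposition gives `(√2 - 1)/2 · (x₄ - 1 + (2 + √2) p) = x₂ ≥ 0`.
-/

open Real

/-- The stabilizer projector `P₀ = |0⟩⟨0|`. -/
noncomputable def P0 : Matrix (Fin 2) (Fin 2) ℝ := !![1, 0; 0, 0]

/-- The stabilizer projector `P₁ = |1⟩⟨1|`. -/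
noncomputable def P1 : Matrix (Fin 2) (Fin 2) ℝ := !![0, 0; 0, 1]

/-- The stabilizer projector `P₊ = |+⟩⟨+|`. -/
noncomputable def Pplus : Matrix (Fin 2) (Fin 2) ℝ := !![1/2, 1/2; 1/2, 1/2]

/-- The magic projector `P_H = |H⟩⟨H|`. -/
noncomputable def PH : Matrix (Fin 2) (Fin 2) ℝ :=
  !![cos (π/8) ^ 2, cos (π/8) * sin (π/8);
     cos (π/8) * sin (π/8), sin (π/8) ^ 2]

/-- The magic state `|H⟩` after dephasing noise of rate `p`. -/
noncomputable def ρdeph (p : ℝ) : Matrix (Fin 2) (Fin 2) ℝ :=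
  !![cos (π/8) ^ 2, (1 - 2*p) * cos (π/8) * sin (π/8);
     (1 - 2*p) * cos (π/8) * sin (π/8), sin (π/8) ^ 2]

theorem sqrt_two_sq : √2 ^ 2 = 2 := sq_sqrt zero_le_two

theorem cos_mul_sin_pi_div_eight : cos (π / 8) * sin (π / 8) = √2 / 4 := by
  have h := sin_two_mul (π / 8)
  rw [show 2 * (π / 8) = π / 4 by ring, sin_pi_div_four] at h
  linarith

theorem cos_sq_pi_div_eight : cos (π / 8) ^ 2 = (2 + √2) / 4 := by
  rw [cos_sq, show 2 * (π / 8) = π / 4 by ring, cos_pi_div_four]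
  ring

theorem sin_sq_pi_div_eight : sin (π / 8) ^ 2 = (2 - √2) / 4 := by
  linarith [sin_sq_add_cos_sq (π / 8), cos_sq_pi_div_eight]

theorem tan_pi_div_eight : tan (π / 8) = √2 - 1 := by
  have hcos : 0 < cos (π / 8) := cos_pos_of_mem_Ioo ⟨by linarith [pi_pos], by linarith [pi_pos]⟩
  rw [tan_eq_sin_div_cos, div_eq_iff hcos.ne']
  refine mul_left_cancel₀ hcos.ne' ?_
  linear_combination cos_mul_sin_pi_div_eight - (√2 - 1) * cos_sq_pi_div_eight
    - sqrt_two_sq / 4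

theorem PH_eq : PH = !![(2 + √2) / 4, √2 / 4; √2 / 4, (2 - √2) / 4] := by
  rw [PH, cos_mul_sin_pi_div_eight, cos_sq_pi_div_eight, sin_sq_pi_div_eight]

theorem ρdeph_eq (p : ℝ) :
    ρdeph p = !![(2 + √2) / 4, (1 - 2 * p) * √2 / 4; (1 - 2 * p) * √2 / 4, (2 - √2) / 4] := by
  rw [ρdeph, mul_assoc, cos_mul_sin_pi_div_eight, cos_sq_pi_div_eight,
    sin_sq_pi_div_eight, mul_div_assoc]

theorem ρdeph_eq_decomposition (p : ℝ) :
    ρdeph p = ((1 + √2) * p) • P0 + p • Pplus + (1 - (2 + √2) * p) • PH := by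
  rw [ρdeph_eq, PH_eq]
  ext i j
  fin_cases i <;> fin_cases j <;>
    simp only [P0, Pplus, Matrix.add_apply, Matrix.smul_apply, Matrix.of_apply, smul_eq_mul,
      Matrix.cons_val', Matrix.cons_val_zero, Matrix.cons_val_one, Matrix.cons_val_fin_one,
      Fin.zero_eta, Fin.mk_one]
  · linear_combination (p / 4) * sqrt_two_sq
  · linear_combination (p / 4) * sqrt_two_sq
  · linear_combination (p / 4) * sqrt_two_sq
  · linear_combination -(p / 4) * sqrt_two_sq

theorem weight_PH_ge_of_decomposition {p x₁ x₂ x₃ x₄ : ℝ} (hx₂ : 0 ≤ x₂)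
    (h : ρdeph p = x₁ • P0 + x₂ • P1 + x₃ • Pplus + x₄ • PH) : 1 - (2 + √2) * p ≤ x₄ := by
  rw [ρdeph_eq, PH_eq] at h
  have h01 : (1 - 2 * p) * √2 / 4 = x₃ * 2⁻¹ + x₄ * (√2 / 4) := by
    simpa [P0, P1, Pplus] using congrFun (congrFun h 0) 1
  have h11 : (2 - √2) / 4 = x₂ + x₃ * 2⁻¹ + x₄ * ((2 - √2) / 4) := by
    simpa [P0, P1, Pplus] using congrFun (congrFun h 1) 1
  have hgap : (√2 - 1) * (x₄ - (1 - (2 + √2) * p)) = 2 * x₂ := by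
    linear_combination 2 * h11 - 2 * h01 + p * sqrt_two_sq
  nlinarith [one_lt_sqrt_two]

theorem decomposition_weights_nonneg {p : ℝ} (hp : 0 ≤ p) (hp' : p ≤ (1 - tan (π / 8)) / 2) :
    0 ≤ (1 + √2) * p ∧ 0 ≤ p ∧ 0 ≤ 1 - (2 + √2) * p := by
  rw [tan_pi_div_eight] at hp'
  refine ⟨by positivity, hp, ?_⟩
  nlinarith [sqrt_two_sq, sqrt_nonneg 2]

theorem stmt_11_general (p : ℝ) (x₁ x₂ x₃ x₄ : ℝ)
    (h2 : 0 ≤ x₂)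
    (heq : ρdeph p = x₁ • P0 + x₂ • P1 + x₃ • Pplus + x₄ • PH) :
    x₄ ≥ 1 - (2 + Real.sqrt 2) * p
    ∧ ρdeph p = ((1 + Real.sqrt 2) * p) • P0 + p • Pplus
        + (1 - (2 + Real.sqrt 2) * p) • PH
    ∧ (0 ≤ p → p ≤ (1 - tan (π/8)) / 2 →
        0 ≤ (1 + Real.sqrt 2) * p ∧ 0 ≤ p ∧ 0 ≤ 1 - (2 + Real.sqrt 2) * p) :=
  ⟨weight_PH_ge_of_decomposition h2 heq, ρdeph_eq_decomposition p,
    fun hp hp' => decomposition_weights_nonneg hp hp'⟩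

theorem stmt_11 (p : ℝ) (x₁ x₂ x₃ x₄ : ℝ)
    (h1 : 0 ≤ x₁) (h2 : 0 ≤ x₂) (h3 : 0 ≤ x₃) (h4 : 0 ≤ x₄)
    (heq : ρdeph p = x₁ • P0 + x₂ • P1 + x₃ • Pplus + x₄ • PH) :
    x₄ ≥ 1 - (2 + Real.sqrt 2) * p
    ∧ ρdeph p = ((1 + Real.sqrt 2) * p) • P0 + p • Pplus
        + (1 - (2 + Real.sqrt 2) * p) • PH
    ∧ (0 ≤ p → p ≤ (1 - tan (π/8)) / 2 →
        0 ≤ (1 + Real.sqrt 2) * p ∧ 0 ≤ p ∧ 0 ≤ 1 - (2 + Real.sqrt 2) * p) :=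
  stmt_11_general p x₁ x₂ x₃ x₄ h2 heq
end
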